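/- (Lemma B.3(b), erasing neighbouring points, stated for a fixed representation) Let A be a unital C*-algebra and u_{ij} ∈ A (1 ≤ i,j ≤ n) be self-adjoint, satisfying Σ_{m=1}^n u_{im}u_{jm} = δ_{ij}·1 and Σ_{m=1}^n u_{mi}u_{mj} = δ_{ij}·1 for all i,j. Let p ∈ P(k,l) with l ≥ 2 and 1 ≤ j ≤ l-1, and suppose the relations R(p) hold for the u_{ij}. Then the relations R(p') hold, where p' ∈ P(k, l-2) is obtained from p by first connecting (merging) the blocks containing the j-th and the (j+1)-th lower points, and then erasing these two points. -/

import Mathlib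

/-!
Put the labels `m, m` on the lower points `j, j+1` of `β` and sum `R(p)` over `m`.
On the left, `δ_p(γ, β with m, m inserted)` forces every point of the merged block of `j, j+1`
to carry the label `m`, so summing over `m` gives `κ · δ_{p'}(γ, β)`, where `κ = n` if that
block is exactly `{j, j+1}` (a removed loop) and `κ = 1` otherwise. On the right, writing the
summation index as `η` with `c, d` inserted, the relation `∑ₘ u_{mc} u_{md} = δ_{cd}` collapses
the two inserted factors, and the same count yields `κ · (right side of R(p'))`. As `κ ≠ 0`
once `n ≠ 0` and a C*-algebra has no additive torsion, `R(p')` follows; for `n = 0` every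
relation is trivial.
-/

open scoped Classical

namespace PartitionCstar

/-- A partition in `P(k,l)`: an equivalence relation (whose classes are the blocks)
on the disjoint union of `k` upper points and `l` lower points. -/
abbrev Partition (k l : ℕ) := Setoid (Fin k ⊕ Fin l)

/-- `labelsMatch p α β` holds iff, labelling the upper points by `α` and the lower points
by `β`, the strings (blocks) of `p` connect only equal indices. -/
def labelsMatch {n k l : ℕ} (p : Partition k l) (α : Fin k → Fin n) (β : Fin l → Fin n) :
    Prop :=
  ∀ x y : Fin k ⊕ Fin l, p.r x y → Sum.elim α β x = Sum.elim α β y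

/-- The delta function `δ_p(α,β) ∈ {0,1}`. -/
noncomputable def delta {n k l : ℕ} (p : Partition k l) (α : Fin k → Fin n)
    (β : Fin l → Fin n) : ℕ :=
  if labelsMatch p α β then 1 else 0

/-- The relations `R(p)` for a matrix of elements `u` of a unital ring:
`∑_γ δ_p(γ,β) u_{γ₁α₁}⋯u_{γₖαₖ} = ∑_{γ'} δ_p(α,γ') u_{β₁γ'₁}⋯u_{β_lγ'_l}`.
(For `k = 0` resp. `l = 0` the empty product is `1`, which yields the conventions
`δ_p(∅,β)·1` resp. `δ_p(α,∅)·1`.) -/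
def SatisfiesRel {A : Type*} [Ring A] {n : ℕ} (u : Fin n → Fin n → A)
    {k l : ℕ} (p : Partition k l) : Prop :=
  ∀ (α : Fin k → Fin n) (β : Fin l → Fin n),
    (∑ γ : Fin k → Fin n,
      if labelsMatch p γ β then (List.ofFn fun s => u (γ s) (α s)).prod else 0)
    = ∑ γ' : Fin l → Fin n,
      if labelsMatch p α γ' then (List.ofFn fun t => u (β t) (γ' t)).prod else 0

/-- The disjoint union of two set partitions. -/
def sumPartition {X Y : Type*} (p : Setoid X) (q : Setoid Y) : Setoid (X ⊕ Y) where
  r := Sum.LiftRel p.r q.r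
  iseqv := by
    refine ⟨fun a => ?_, fun {a b} h => ?_, fun {a b c} h₁ h₂ => ?_⟩
    · cases a with
      | inl x => exact Sum.LiftRel.inl (p.iseqv.refl x)
      | inr y => exact Sum.LiftRel.inr (q.iseqv.refl y)
    · cases h with
      | inl h => exact Sum.LiftRel.inl (p.iseqv.symm h)
      | inr h => exact Sum.LiftRel.inr (q.iseqv.symm h)
    · cases h₁ with
      | inl h₁ =>
        cases h₂ with
        | inl h₂ => exact Sum.LiftRel.inl (p.iseqv.trans h₁ h₂)
      | inr h₁ =>
        cases h₂ with
        | inr h₂ => exact Sum.LiftRel.inr (q.iseqv.trans h₁ h₂)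

/-- Reindexing equivalence for the tensor product of partitions. -/
def tensorEquiv (k l k' l' : ℕ) :
    (Fin (k + k') ⊕ Fin (l + l')) ≃ ((Fin k ⊕ Fin l) ⊕ (Fin k' ⊕ Fin l')) :=
  (Equiv.sumCongr finSumFinEquiv.symm finSumFinEquiv.symm).trans
    (Equiv.sumSumSumComm (Fin k) (Fin k') (Fin l) (Fin l'))

/-- The tensor product `p ⊗ q` of two partitions: horizontal concatenation,
blocks kept separate. -/
def tensor {k l k' l' : ℕ} (p : Partition k l) (q : Partition k' l') :
    Partition (k + k') (l + l') :=
  Setoid.comap (tensorEquiv k l k' l') (sumPartition p q)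

/-- The join of `p ∈ P(k,l)` and `q ∈ P(l,m)` on the `k` upper, `l` middle and
`m` lower points, identifying the lower points of `p` with the upper points of `q`. -/
def compJoin {k l m : ℕ} (q : Partition l m) (p : Partition k l) :
    Setoid (Fin k ⊕ (Fin l ⊕ Fin m)) :=
  (Setoid.comap (Equiv.sumAssoc (Fin k) (Fin l) (Fin m)).symm
      (sumPartition p (⊥ : Setoid (Fin m))))
    ⊔ sumPartition (⊥ : Setoid (Fin k)) q

/-- The composition `qp ∈ P(k,m)` of `q ∈ P(l,m)` below `p ∈ P(k,l)`: restriction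
of the join to the upper and lower points. -/
def comp {k l m : ℕ} (q : Partition l m) (p : Partition k l) : Partition k m :=
  Setoid.comap (Sum.map id Sum.inr : Fin k ⊕ Fin m → Fin k ⊕ (Fin l ⊕ Fin m))
    (compJoin q p)

/-- Middle points in the composition procedure. -/
def IsMiddle {k l m : ℕ} : Fin k ⊕ (Fin l ⊕ Fin m) → Prop
  | Sum.inr (Sum.inl _) => True
  | _ => False

/-- `rl q p`: the number of removed loops in the composition of `q` and `p`, i.e. the
number of blocks of the join consisting entirely of middle points. -/
noncomputable def rl {k l m : ℕ} (q : Partition l m) (p : Partition k l) : ℕ :=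
  Nat.card {c : Quotient (compJoin q p) //
    ∀ x : Fin k ⊕ (Fin l ⊕ Fin m), Quotient.mk (compJoin q p) x = c → IsMiddle x}

/-- The involution `p* ∈ P(l,k)`: turning `p ∈ P(k,l)` upside down. -/
def involution {k l : ℕ} (p : Partition k l) : Partition l k :=
  Setoid.comap (Equiv.sumComm (Fin l) (Fin k)) p

/-- The vertical reflection `p̃ ∈ P(k,l)`: reflecting `p` at the vertical axis. -/
def reflect {k l : ℕ} (p : Partition k l) : Partition k l :=
  Setoid.comap (Sum.map Fin.rev Fin.rev) p

/-- The setoid relating `x` and `y` (and nothing else besides equality). -/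
def pairSetoid {X : Type*} (x y : X) : Setoid X where
  r a b := a = b ∨ (a = x ∧ b = y) ∨ (a = y ∧ b = x)
  iseqv := by
    refine ⟨fun a => Or.inl rfl, fun {a b} h => ?_, fun {a b c} h₁ h₂ => ?_⟩
    · rcases h with rfl | ⟨ha, hb⟩ | ⟨ha, hb⟩
      · exact Or.inl rfl
      · exact Or.inr (Or.inr ⟨hb, ha⟩)
      · exact Or.inr (Or.inl ⟨hb, ha⟩)
    · rcases h₁ with rfl | h₁
      · exact h₂
      · rcases h₂ with rfl | h₂
        · exact Or.inr h₁
        · rcases h₁ with ⟨ha, hb⟩ | ⟨ha, hb⟩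
          · rcases h₂ with ⟨hb', hc⟩ | ⟨hb', hc⟩
            · exact Or.inr (Or.inl ⟨ha, hc⟩)
            · exact Or.inl (ha.trans hc.symm)
          · rcases h₂ with ⟨hb', hc⟩ | ⟨hb', hc⟩
            · exact Or.inl (ha.trans hc.symm)
            · exact Or.inr (Or.inr ⟨ha, hc⟩)

/-- Connecting (merging) the blocks of the points `x` and `y` of a partition. -/
def mergeBlocks {X : Type*} (p : Setoid X) (x y : X) : Setoid X :=
  p ⊔ pairSetoid x y

/-- Disconnecting the point `x` from its block and turning it into a singleton block. -/
def disconnect {X : Type*} (p : Setoid X) (x : X) : Setoid X where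
  r a b := a = b ∨ (p.r a b ∧ a ≠ x ∧ b ≠ x)
  iseqv := by
    refine ⟨fun a => Or.inl rfl, fun {a b} h => ?_, fun {a b c} h₁ h₂ => ?_⟩
    · rcases h with rfl | ⟨h, ha, hb⟩
      · exact Or.inl rfl
      · exact Or.inr ⟨p.iseqv.symm h, hb, ha⟩
    · rcases h₁ with rfl | ⟨h₁, ha, hb⟩
      · exact h₂
      · rcases h₂ with rfl | ⟨h₂, hb', hc⟩
        · exact Or.inr ⟨h₁, ha, hb⟩
        · exact Or.inr ⟨p.iseqv.trans h₁ h₂, ha, hc⟩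

/-- The partition of the lower points induced by `p ∈ P(0,l)`. -/
def lowerSetoid {l : ℕ} (p : Partition 0 l) : Setoid (Fin l) :=
  Setoid.comap Sum.inr p

/-- The reindexing map for inserting `m` points after position `t` among `l` points. -/
def insertMap (l m t : ℕ) (ht : t ≤ l) : Fin (l + m) → Fin l ⊕ Fin m := fun i =>
  if h1 : (i : ℕ) < t then Sum.inl ⟨i, lt_of_lt_of_le h1 ht⟩
  else if h2 : (i : ℕ) < t + m then Sum.inr ⟨(i : ℕ) - t, by omega⟩
  else Sum.inl ⟨(i : ℕ) - m, by have := i.isLt; omega⟩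

/-- The partition in `P(0, l+m)` obtained from `p ∈ P(0,l)` by inserting `q ∈ P(0,m)`
after the `t`-th lower point of `p` (blocks of `p` and `q` kept separate). -/
def insertAt {l m : ℕ} (p : Partition 0 l) (q : Partition 0 m) (t : ℕ) (ht : t ≤ l) :
    Partition 0 (l + m) :=
  Setoid.comap (Sum.elim (fun a : Fin 0 => a.elim0) (insertMap l m t ht))
    (sumPartition (lowerSetoid p) (lowerSetoid q))

/-- The reindexing map for the rotation moving the leftmost upper point to the
leftmost lower position. -/
def rotateMap (k l : ℕ) : Fin k ⊕ Fin (l + 1) → Fin (k + 1) ⊕ Fin l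
  | Sum.inl a => Sum.inl a.succ
  | Sum.inr b => Fin.cases (Sum.inl (0 : Fin (k + 1))) (fun b' => Sum.inr b') b

/-- The rotated version of `p ∈ P(k+1, l)`: the leftmost upper point becomes the new
leftmost lower point (staying in its block). -/
def rotate {k l : ℕ} (p : Partition (k + 1) l) : Partition k (l + 1) :=
  Setoid.comap (rotateMap k l) p

/-- The embedding of the remaining points after erasing the lower points `j` and `j+1`. -/
def eraseMap (k l j : ℕ) : Fin k ⊕ Fin l → Fin k ⊕ Fin (l + 2) :=
  Sum.map id fun b =>
    if (b : ℕ) < j then ⟨(b : ℕ), by have := b.isLt; omega⟩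
    else ⟨(b : ℕ) + 2, by have := b.isLt; omega⟩

/-- The partition in `P(k,l)` obtained from `p ∈ P(k,l+2)` by connecting the blocks of
the `j`-th and `(j+1)`-th lower points and then erasing those two points. -/
def erasePair {k l : ℕ} (p : Partition k (l + 2)) (j : Fin (l + 1)) : Partition k l :=
  Setoid.comap (eraseMap k l j)
    (mergeBlocks p (Sum.inr ⟨(j : ℕ), by have := j.isLt; omega⟩)
      (Sum.inr ⟨(j : ℕ) + 1, by have := j.isLt; omega⟩))

/-- The non-unital relations `R(p)` relative to a projection `P₀`:
`P₀·∑_γ δ_p(γ,β) u_{γ₁α₁}⋯u_{γₖαₖ} = (∑_{γ'} δ_p(α,γ') u_{β₁γ'₁}⋯u_{β_lγ'_l})·P₀`,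
with the conventions `δ_p(∅,β)·P₀` resp. `δ_p(α,∅)·P₀` for `k = 0` resp. `l = 0`. -/
def SatisfiesRelNU {A : Type*} [NonUnitalRing A] {n : ℕ} (P₀ : A)
    (u : Fin n → Fin n → A) {k l : ℕ} (p : Partition k l) : Prop :=
  ∀ (α : Fin k → Fin n) (β : Fin l → Fin n),
    (∑ γ : Fin k → Fin n,
      if labelsMatch p γ β then
        (List.ofFn fun s => u (γ s) (α s)).foldl (· * ·) P₀ else 0)
    = ∑ γ' : Fin l → Fin n,
      if labelsMatch p α γ' then
        (List.ofFn fun t => u (β t) (γ' t)).foldr (· * ·) P₀ else 0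

theorem _root_.List.insertIdx_eq_take_append_drop {α : Type*} (x : α) (L : List α) (i : ℕ)
    (h : i ≤ L.length) : L.insertIdx i x = L.take i ++ x :: L.drop i := by
  induction L generalizing i with
  | nil => simp_all
  | cons a L ih => cases i <;> simp_all

theorem _root_.List.ofFn_insertNth {α : Type*} {n : ℕ} (i : Fin (n + 1)) (x : α)
    (f : Fin n → α) :
    List.ofFn (Fin.insertNth i x f) = (List.ofFn f).insertIdx i x := by
  induction n with
  | zero => simp [Fin.fin_one_eq_zero i]
  | succ n ih =>
    induction i using Fin.cases with
    | zero => simp [List.ofFn_succ]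
    | succ i =>
      rw [← Fin.cons_self_tail f, Fin.insertNth_succ_cons, List.ofFn_cons, List.ofFn_cons, ih]
      rfl

section Setoid

variable {X Y N : Type*}

noncomputable def loopFactor (n : ℕ) (q : Setoid X) (x y : X) : ℕ :=
  if ∀ z, q z x → z = x ∨ z = y then n else 1

theorem loopFactor_ne_zero {n : ℕ} (hn : n ≠ 0) (q : Setoid X) (x y : X) :
    loopFactor n q x y ≠ 0 := by
  unfold loopFactor
  split_ifs <;> omega

theorem mergeBlocks_rel (p : Setoid X) (x y : X) : mergeBlocks p x y x y :=
  Setoid.le_def.mp le_sup_right (Or.inr (Or.inl ⟨rfl, rfl⟩))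

theorem mergeBlocks_le_ker_iff {p : Setoid X} {x y : X} {f : X → N} (h : f x = f y) :
    mergeBlocks p x y ≤ Setoid.ker f ↔ p ≤ Setoid.ker f := by
  refine ⟨le_trans le_sup_left, fun hp => sup_le hp ?_⟩
  rw [Setoid.le_def]
  rintro a b (rfl | ⟨rfl, rfl⟩ | ⟨rfl, rfl⟩)
  exacts [rfl, h, h.symm]

theorem le_ker_iff_comap_le_ker {q : Setoid X} {e : Y → X} {x y : X} (hxy : q x y)
    (he : ∀ z, z ≠ x → z ≠ y → z ∈ Set.range e) {f : X → N} :
    q ≤ Setoid.ker f ↔ q.comap e ≤ Setoid.ker (f ∘ e) ∧ ∀ z, q z x → f z = f x := by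
  refine ⟨fun hf => ⟨fun _ _ h => hf h, fun z hz => hf hz⟩, fun ⟨hfe, hfx⟩ => ?_⟩
  rw [Setoid.le_def]
  intro a b hab
  by_cases hax : q a x
  · exact (hfx a hax).trans (hfx b (q.trans (q.symm hab) hax)).symm
  have hrange : ∀ c, q a c → c ∈ Set.range e := fun c hac =>
    he c (by rintro rfl; exact hax hac) (by rintro rfl; exact hax (q.trans hac (q.symm hxy)))
  obtain ⟨a', rfl⟩ := hrange a (q.refl a)
  obtain ⟨b', rfl⟩ := hrange b hab
  exact hfe hab

open Finset in
theorem card_filter_le_ker [Fintype N] {q : Setoid X} {e : Y → X} {x y : X} (hxy : q x y)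
    (he : ∀ z, z ≠ x → z ≠ y → z ∈ Set.range e) {F : N → X → N} {g : Y → N}
    (hFe : ∀ m, F m ∘ e = g) (hFx : ∀ m, F m x = m) (hFy : ∀ m, F m y = m) :
    #{m | q ≤ Setoid.ker (F m)} =
      if q.comap e ≤ Setoid.ker g then loopFactor (Fintype.card N) q x y else 0 := by
  simp_rw [le_ker_iff_comap_le_ker hxy he, hFe, hFx]
  split_ifs with hg
  swap
  · simp [hg]
  simp only [hg, true_and]
  unfold loopFactor
  split_ifs with hloop
  · refine (congrArg card (filter_true_of_mem fun m _ z hz => ?_)).trans card_univ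
    rcases hloop z hz with rfl | rfl
    exacts [hFx m, hFy m]
  push Not at hloop
  obtain ⟨z, hz, hzx, hzy⟩ := hloop
  obtain ⟨w, rfl⟩ := he z hzx hzy
  refine card_eq_one.mpr ⟨g w, eq_singleton_iff_unique_mem.mpr ⟨?_, fun m hm => ?_⟩⟩
  · simp only [mem_filter, mem_univ, true_and]
    intro z' hz'
    by_cases hz'x : z' = x
    · exact hz'x ▸ hFx _
    by_cases hz'y : z' = y
    · exact hz'y ▸ hFy _
    obtain ⟨w', rfl⟩ := he z' hz'x hz'y
    exact (congrFun (hFe (g w)) w').trans (hg (q.trans hz' (q.symm hz)))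
  · rw [mem_filter] at hm
    rw [← hm.2 _ hz, ← congrFun (hFe m) w]
    rfl

end Setoid

theorem labelsMatch_iff_le_ker {n k l : ℕ} {p : Partition k l} {α : Fin k → Fin n}
    {β : Fin l → Fin n} : labelsMatch p α β ↔ p ≤ Setoid.ker (Sum.elim α β) :=
  Iff.rfl

section InsertPair

variable {α : Type*} {l : ℕ}

def insertPair (j : Fin (l + 1)) (f : Fin l → α) (a b : α) : Fin (l + 2) → α :=
  Fin.insertNth j.castSucc a (Fin.insertNth j b f)

variable (α) in
def insertPairEquiv (j : Fin (l + 1)) : α × α × (Fin l → α) ≃ (Fin (l + 2) → α) :=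
  (Equiv.prodCongr (Equiv.refl α) (Fin.insertNthEquiv (fun _ => α) j)).trans
    (Fin.insertNthEquiv (fun _ => α) j.castSucc)

variable (j : Fin (l + 1)) (f : Fin l → α) (a b : α)

@[simp]
theorem insertPair_castSucc : insertPair j f a b j.castSucc = a := by
  simp [insertPair]

@[simp]
theorem insertPair_succ : insertPair j f a b j.succ = b := by
  rw [insertPair, ← Fin.succAbove_castSucc_self, Fin.insertNth_apply_succAbove,
    Fin.insertNth_apply_same]

@[simp]
theorem insertPair_succAbove_succAbove (t : Fin l) :
    insertPair j f a b (j.castSucc.succAbove (j.succAbove t)) = f t := by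
  simp [insertPair]

theorem insertPair_apply₂ {β γ : Type*} (g : α → β → γ) (f' : Fin l → β)
    (a' b' : β) :
    (fun t => g (insertPair j f a b t) (insertPair j f' a' b' t)) =
      insertPair j (fun t => g (f t) (f' t)) (g a a') (g b b') := by
  funext t
  cases t using Fin.succAboveCases j.castSucc with
  | x => simp
  | p s =>
    cases s using Fin.succAboveCases j with
    | x => simp
    | p t => simp

theorem ofFn_insertPair :
    List.ofFn (insertPair j f a b) =
      (List.ofFn f).take j ++ a :: b :: (List.ofFn f).drop j := by
  have hj : (j : ℕ) ≤ l := Nat.lt_succ_iff.mp j.isLt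
  rw [insertPair, List.ofFn_insertNth, List.ofFn_insertNth,
    List.insertIdx_eq_take_append_drop b (List.ofFn f) j (by simpa using hj),
    List.insertIdx_eq_take_append_drop _ _ _ (by simp; omega)]
  simp [hj]

@[simp]
theorem insertPairEquiv_apply (x : α × α × (Fin l → α)) :
    insertPairEquiv α j x = insertPair j x.2.2 x.1 x.2.1 :=
  rfl

end InsertPair

section ErasePair

variable {n k l : ℕ}

theorem eraseMap_inr (j : Fin (l + 1)) (b : Fin l) :
    eraseMap k l j (Sum.inr b) = Sum.inr (j.castSucc.succAbove (j.succAbove b)) := by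
  simp only [eraseMap, Sum.map_inr, Sum.inr.injEq]
  ext
  simp only [Fin.succAbove, Fin.lt_def]
  split_ifs <;> simp_all <;> omega

theorem elim_insertPair_comp_eraseMap (j : Fin (l + 1)) {α : Type*} (υ : Fin k → α)
    (β : Fin l → α) (a b : α) :
    Sum.elim υ (insertPair j β a b) ∘ eraseMap k l j = Sum.elim υ β := by
  funext w
  rcases w with s | t
  · rfl
  · simp [eraseMap_inr]

theorem mem_range_eraseMap {j : Fin (l + 1)} {z : Fin k ⊕ Fin (l + 2)}
    (hx : z ≠ Sum.inr j.castSucc) (hy : z ≠ Sum.inr j.succ) :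
    z ∈ Set.range (eraseMap k l j) := by
  rcases z with s | t
  · exact ⟨Sum.inl s, rfl⟩
  obtain ⟨t, rfl⟩ := Fin.exists_succAbove_eq fun h => hx (congrArg Sum.inr h)
  obtain ⟨b, rfl⟩ := Fin.exists_succAbove_eq (x := t) (y := j) fun h => hy <| by
    rw [h, Fin.succAbove_castSucc_self]
  exact ⟨Sum.inr b, eraseMap_inr j b⟩

noncomputable def erasedLoopFactor (n : ℕ) (p : Partition k (l + 2)) (j : Fin (l + 1)) : ℕ :=
  loopFactor n (mergeBlocks p (Sum.inr j.castSucc) (Sum.inr j.succ)) (Sum.inr j.castSucc)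
    (Sum.inr j.succ)

theorem erasedLoopFactor_ne_zero (hn : n ≠ 0) (p : Partition k (l + 2)) (j : Fin (l + 1)) :
    erasedLoopFactor n p j ≠ 0 :=
  loopFactor_ne_zero hn _ _ _

open Finset in
theorem card_filter_labelsMatch_insertPair (p : Partition k (l + 2)) (j : Fin (l + 1))
    (υ : Fin k → Fin n) (β : Fin l → Fin n) :
    #{m | labelsMatch p υ (insertPair j β m m)} =
      if labelsMatch (erasePair p j) υ β then erasedLoopFactor n p j else 0 := by
  have hmerge : ∀ m, labelsMatch p υ (insertPair j β m m) ↔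
      mergeBlocks p (Sum.inr j.castSucc) (Sum.inr j.succ) ≤
        Setoid.ker (Sum.elim υ (insertPair j β m m)) :=
    fun m => labelsMatch_iff_le_ker.trans (mergeBlocks_le_ker_iff (by simp)).symm
  simp_rw [hmerge]
  rw [card_filter_le_ker (mergeBlocks_rel _ _ _) (fun _ => mem_range_eraseMap)
    (fun _ => elim_insertPair_comp_eraseMap j υ β _ _) (fun _ => by simp) (fun _ => by simp),
    Fintype.card_fin]
  rfl

open Finset in
theorem sum_ite_labelsMatch_insertPair {M : Type*} [AddCommMonoid M] (p : Partition k (l + 2))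
    (j : Fin (l + 1)) (υ : Fin k → Fin n) (β : Fin l → Fin n) (P : M) :
    ∑ m, (if labelsMatch p υ (insertPair j β m m) then P else 0) =
      erasedLoopFactor n p j • if labelsMatch (erasePair p j) υ β then P else 0 := by
  rw [← sum_filter, sum_const, card_filter_labelsMatch_insertPair]
  split_ifs <;> simp

end ErasePair

section Relations

variable {A : Type*} [Ring A] {n k l : ℕ} (u : Fin n → Fin n → A)

noncomputable def relLhs (p : Partition k l) (α : Fin k → Fin n) (β : Fin l → Fin n) : A :=
  ∑ γ : Fin k → Fin n,
    if labelsMatch p γ β then (List.ofFn fun s => u (γ s) (α s)).prod else 0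

noncomputable def relRhs (p : Partition k l) (α : Fin k → Fin n) (β : Fin l → Fin n) : A :=
  ∑ γ' : Fin l → Fin n,
    if labelsMatch p α γ' then (List.ofFn fun t => u (β t) (γ' t)).prod else 0

theorem satisfiesRel_iff (p : Partition k l) :
    SatisfiesRel u p ↔ ∀ α β, relLhs u p α β = relRhs u p α β :=
  Iff.rfl

theorem satisfiesRel_fin_zero (u : Fin 0 → Fin 0 → A) (p : Partition k l) :
    SatisfiesRel u p := by
  intro α β
  cases k with
  | succ k => exact (α 0).elim0
  | zero =>
    cases l with
    | succ l => exact (β 0).elim0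
    | zero =>
      rw [Fintype.sum_subsingleton _ α, Fintype.sum_subsingleton _ β]
      rfl

theorem sum_relLhs_insertPair (p : Partition k (l + 2)) (j : Fin (l + 1))
    (α : Fin k → Fin n) (β : Fin l → Fin n) :
    ∑ m, relLhs u p α (insertPair j β m m) =
      erasedLoopFactor n p j • relLhs u (erasePair p j) α β := by
  simp only [relLhs]
  rw [Finset.sum_comm, Finset.smul_sum]
  exact Finset.sum_congr rfl fun γ _ => sum_ite_labelsMatch_insertPair p j γ β _

variable {u} in
theorem sum_prod_ofFn_insertPair (hcol : ∀ c d, ∑ m, u m c * u m d = if c = d then 1 else 0)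
    (j : Fin (l + 1)) (β η : Fin l → Fin n) (c d : Fin n) :
    ∑ m, (List.ofFn fun t => u (insertPair j β m m t) (insertPair j η c d t)).prod =
      if c = d then (List.ofFn fun t => u (β t) (η t)).prod else 0 := by
  let L := List.ofFn fun t => u (β t) (η t)
  calc _ = ∑ m, (L.take j).prod * (u m c * u m d) * (L.drop j).prod := by
          refine Finset.sum_congr rfl fun m _ => ?_
          rw [insertPair_apply₂, ofFn_insertPair]
          simp [L, List.prod_append, mul_assoc]
    _ = (L.take j).prod * (∑ m, u m c * u m d) * (L.drop j).prod := by
          rw [Finset.mul_sum, Finset.sum_mul]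
    _ = _ := by
          rw [hcol]
          split_ifs <;> simp [L, ← List.prod_append]

theorem sum_relRhs_insertPair (hcol : ∀ c d, ∑ m, u m c * u m d = if c = d then 1 else 0)
    (p : Partition k (l + 2)) (j : Fin (l + 1)) (α : Fin k → Fin n) (β : Fin l → Fin n) :
    ∑ m, relRhs u p α (insertPair j β m m) =
      erasedLoopFactor n p j • relRhs u (erasePair p j) α β := by
  let P : (Fin l → Fin n) → A := fun η => (List.ofFn fun t => u (β t) (η t)).prod
  calc ∑ m, relRhs u p α (insertPair j β m m)
      = ∑ γ', if labelsMatch p α γ' then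
          ∑ m, (List.ofFn fun t => u (insertPair j β m m t) (γ' t)).prod else 0 := by
        simp only [relRhs]
        rw [Finset.sum_comm]
        simp only [Finset.sum_ite_irrel, Finset.sum_const_zero]
    _ = ∑ c, ∑ d, ∑ η, if labelsMatch p α (insertPair j η c d) then
          ∑ m, (List.ofFn fun t => u (insertPair j β m m t) (insertPair j η c d t)).prod
          else 0 := by
        rw [← (insertPairEquiv (Fin n) j).sum_comp]
        simp only [Fintype.sum_prod_type, insertPairEquiv_apply]
    _ = ∑ c, ∑ η, ∑ d, if c = d then
          (if labelsMatch p α (insertPair j η c d) then P η else 0) else 0 := by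
        refine Finset.sum_congr rfl fun c _ => ?_
        rw [Finset.sum_comm]
        refine Finset.sum_congr rfl fun η _ => Finset.sum_congr rfl fun d _ => ?_
        rw [sum_prod_ofFn_insertPair hcol]
        split_ifs <;> simp_all [P]
    _ = ∑ η, ∑ c, if labelsMatch p α (insertPair j η c c) then P η else 0 := by
        rw [Finset.sum_comm]
        simp
    _ = erasedLoopFactor n p j • relRhs u (erasePair p j) α β := by
        rw [relRhs, Finset.smul_sum]
        exact Finset.sum_congr rfl fun η _ => sum_ite_labelsMatch_insertPair p j α η _

theorem satisfiesRel_erasePair_of_isAddTorsionFree [IsAddTorsionFree A]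
    (hcol : ∀ c d, ∑ m, u m c * u m d = if c = d then 1 else 0)
    (p : Partition k (l + 2)) (j : Fin (l + 1)) (hp : SatisfiesRel u p) :
    SatisfiesRel u (erasePair p j) := by
  rcases eq_or_ne n 0 with rfl | hn
  · exact satisfiesRel_fin_zero u _
  rw [satisfiesRel_iff] at hp ⊢
  refine fun α β => nsmul_right_injective (erasedLoopFactor_ne_zero hn p j) ?_
  dsimp only
  rw [← sum_relLhs_insertPair, ← sum_relRhs_insertPair u hcol]
  exact Finset.sum_congr rfl fun m _ => hp α _

end Relations

theorem satisfiesRel_erasePair_general {A : Type*} [CStarAlgebra A] {n : ℕ}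
    (u : Fin n → Fin n → A)
    (hpair₂ : ∀ i j, (∑ m, u m i * u m j) = if i = j then (1 : A) else 0)
    {k l : ℕ} (p : Partition k (l + 2)) (j : Fin (l + 1))
    (hp : SatisfiesRel u p) :
    SatisfiesRel u (erasePair p j) :=
  have := IsAddTorsionFree.of_isTorsionFree ℂ A
  satisfiesRel_erasePair_of_isAddTorsionFree u hpair₂ p j hp

/-- Lemma B.3(b) (erasing neighbouring points, for a fixed representation): given the
pair relations, if the relations `R(p)` hold for `p ∈ P(k,l+2)`, then the relations of
the partition in `P(k,l)` obtained by merging the blocks of the `j`-th and `(j+1)`-th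
lower points and erasing those two points hold as well. -/
theorem satisfiesRel_erasePair {A : Type*} [CStarAlgebra A] {n : ℕ}
    (u : Fin n → Fin n → A) (hsa : ∀ i j, IsSelfAdjoint (u i j))
    (hpair₁ : ∀ i j, (∑ m, u i m * u j m) = if i = j then (1 : A) else 0)
    (hpair₂ : ∀ i j, (∑ m, u m i * u m j) = if i = j then (1 : A) else 0)
    {k l : ℕ} (p : Partition k (l + 2)) (j : Fin (l + 1))
    (hp : SatisfiesRel u p) :
    SatisfiesRel u (erasePair p j) :=
  satisfiesRel_erasePair_general u hpair₂ p j hp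

end PartitionCstar
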